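/- arXiv:1603.03134 — 4 statements merged into one kernel-verified Lean document; each statement's English description precedes it below -/
import Mathlib

section
/- Let \(p\) be a prime, \(q\) a positive integer, and \(d,m,n\) integers. Then the number of pairs \((a,b)\) of residues modulo \(qp\) with \(ab\equiv 1\ (\mathrm{mod}\ qp)\), \(ad\equiv m\ (\mathrm{mod}\ q)\) and \(b\equiv n\ (\mathrm{mod}\ q)\) equals \(p-1+\mathbf{1}_{p\mid q}\) if \(\gcd(n,q)=1\) and \(mn\equiv d\ (\mathrm{mod}\ q)\), and equals \(0\) otherwise. -/
/-!
A pair with `ab = 1` is the same as a unit `b` of `ZMod (q * p)`, and both congruence conditions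
only see the image `v` of `b` in `(ZMod q)ˣ`: they say `v = n` and `d = v * m`. So there are no
solutions unless `n` is a unit with `d ≡ m n`, and otherwise the solutions form one fibre of the
surjection `(ZMod (q * p))ˣ → (ZMod q)ˣ`, of size `φ(qp) / φ(q) = p - 1 + 𝟙_{p ∣ q}`.
-/

open Function

def mulEqOneSubtypeEquivUnits {M : Type*} [CommMonoid M] (P : M × M → Prop) :
    {ab : M × M // ab.1 * ab.2 = 1 ∧ P ab} ≃ {u : Mˣ // P (↑u⁻¹, ↑u)} where
  toFun ab := ⟨⟨ab.1.2, ab.1.1, mul_comm ab.1.1 ab.1.2 ▸ ab.2.1, ab.2.1⟩, ab.2.2⟩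
  invFun u := ⟨(↑u.1⁻¹, u.1), u.1.inv_mul, u.2⟩
  left_inv _ := rfl
  right_inv _ := rfl

lemma MonoidHom.card_preimage_singleton_mul_card_of_surjective {G H : Type*} [Group G] [Group H]
    [Finite G] {f : G →* H} (hf : Surjective f) (h : H) :
    Nat.card (f ⁻¹' {h}) * Nat.card H = Nat.card G := by
  rw [Nat.card_congr (f.fiberEquivKerOfSurjective hf h), ← f.ker.card_mul_index, Subgroup.index_ker,
    f.range_eq_top.mpr hf, Subgroup.card_top]

lemma Nat.totient_mul_prime {p : ℕ} (hp : p.Prime) (q : ℕ) :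
    (q * p).totient = (p - 1 + if p ∣ q then 1 else 0) * q.totient := by
  rw [mul_comm q p]
  split_ifs with hpq
  · rw [Nat.sub_add_cancel hp.one_le, Nat.totient_mul_of_prime_of_dvd hp hpq]
  · rw [add_zero, Nat.totient_mul_of_prime_of_not_dvd hp hpq]

lemma ZMod.isUnit_intCast_and_intCast_eq_iff (q : ℕ) (d m n : ℤ) :
    (IsUnit (n : ZMod q) ∧ (d : ZMod q) = n * m) ↔
      Int.gcd n q = 1 ∧ m * n % q = d % q := by
  rw [ZMod.coe_int_isUnit_iff_isCoprime, isCoprime_comm, Int.isCoprime_iff_gcd_eq_one,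
    ← ZMod.intCast_eq_intCast_iff', Int.cast_mul, mul_comm (n : ZMod q),
    eq_comm (a := (d : ZMod q))]

/-- Let `p` be a prime, `q ≥ 1`, and `d, m, n` integers.  The number of pairs `(a,b)` of
residues modulo `qp` with `ab ≡ 1 (mod qp)`, `ad ≡ m (mod q)` and `b ≡ n (mod q)` equals
`p - 1 + 𝟙_{p ∣ q}` if `gcd(n,q) = 1` and `mn ≡ d (mod q)`, and `0` otherwise. -/
theorem count_pairs_mod_q_q (p q : ℕ) (hp : p.Prime) (hq : 0 < q) (d m n : ℤ) :
    Nat.card {ab : ZMod (q * p) × ZMod (q * p) //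
        ab.1 * ab.2 = 1 ∧
        ZMod.castHom (dvd_mul_right q p) (ZMod q) ab.1 * (d : ZMod q) = (m : ZMod q) ∧
        ZMod.castHom (dvd_mul_right q p) (ZMod q) ab.2 = (n : ZMod q)}
      = if Int.gcd n (q : ℤ) = 1 ∧ (m * n) % (q : ℤ) = d % (q : ℤ) then
          p - 1 + (if p ∣ q then 1 else 0)
        else 0 := by
  have : NeZero q := ⟨hq.ne'⟩
  have : NeZero (q * p) := ⟨(Nat.mul_pos hq hp.pos).ne'⟩
  set π := ZMod.unitsMap (dvd_mul_right q p)
  have hπ (v : (ZMod (q * p))ˣ) : ZMod.castHom (dvd_mul_right q p) (ZMod q) v = π v := rfl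
  rw [Nat.card_congr (mulEqOneSubtypeEquivUnits _)]
  simp only [hπ, map_inv, Units.inv_mul_eq_iff_eq_mul]
  by_cases hcond : IsUnit (n : ZMod q) ∧ (d : ZMod q) = n * m
  · rw [if_pos (ZMod.isUnit_intCast_and_intCast_eq_iff q d m n |>.mp hcond)]
    obtain ⟨hn, hd⟩ := hcond
    have hfiber (u : (ZMod (q * p))ˣ) :
        ((d : ZMod q) = π u * (m : ZMod q) ∧ (π u : ZMod q) = n) ↔ π u = hn.unit := by
      rw [Units.ext_iff, hn.unit_spec, and_iff_right_iff_imp]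
      exact fun hu => by rw [hd, hu]
    rw [Nat.card_congr (Equiv.subtypeEquivRight hfiber)]
    apply Nat.eq_of_mul_eq_mul_right (Nat.totient_pos.mpr hq)
    rw [← Nat.totient_mul_prime hp, ← ZMod.card_units_eq_totient, ← ZMod.card_units_eq_totient,
      Fintype.card_eq_nat_card, Fintype.card_eq_nat_card]
    exact MonoidHom.card_preimage_singleton_mul_card_of_surjective (ZMod.unitsMap_surjective _) _
  · rw [if_neg (mt (ZMod.isUnit_intCast_and_intCast_eq_iff q d m n).mpr hcond)]
    have : IsEmpty {u // (d : ZMod q) = π u * (m : ZMod q) ∧ (π u : ZMod q) = n} :=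
      ⟨fun ⟨u, hd, hn⟩ => hcond ⟨hn ▸ (π u).isUnit, hn ▸ hd⟩⟩
    exact Nat.card_of_isEmpty
end

section
/- Let \(p\) be a prime, \(q\) a positive integer, and \(d,m,n\) integers with \(\gcd(d,p)=1\). Then the number of pairs \((a,b)\) of residues modulo \(qp\) with \(ab\equiv 1\ (\mathrm{mod}\ qp)\), \(ad\equiv m\ (\mathrm{mod}\ qp)\) and \(b\equiv n\ (\mathrm{mod}\ q)\) equals \(1\) if \(\gcd(n,q)=1\), \(\gcd(m,p)=1\) and \(mn\equiv d\ (\mathrm{mod}\ q)\), and equals \(0\) otherwise. -/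
/-!
Reducing modulo `q`, a pair `(a, b)` forces `a ≡ n⁻¹ (mod q)`, while `a d ≡ m (mod qp)`. Since `d`
is invertible modulo `p`, multiplication by `d` is bijective on the kernel `q ℤ / qp ℤ ≅ ℤ / p`
of reduction modulo `q`; so these two congruences determine `a` (and then `b = a⁻¹`), and they
have a common solution exactly when `m n ≡ d (mod q)`. Such an `a` is a unit modulo `qp`, because
it is one modulo `q` and, as `a d ≡ m`, modulo `p` when `gcd(m, p) = 1`.
-/

namespace ZMod

theorem isUnit_intCast_iff_gcd_eq_one (n : ℤ) (q : ℕ) :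
    IsUnit (n : ZMod q) ↔ Int.gcd n q = 1 := by
  rw [coe_int_isUnit_iff_isCoprime, isCoprime_comm, Int.isCoprime_iff_gcd_eq_one]

theorem exists_eq_natCast_mul_of_castHom_eq_zero {m n : ℕ} (h : m ∣ n) {x : ZMod n}
    (hx : castHom h (ZMod m) x = 0) : ∃ c : ZMod n, x = m * c := by
  obtain ⟨X, rfl⟩ := intCast_surjective x
  rw [map_intCast, intCast_zmod_eq_zero_iff_dvd] at hx
  obtain ⟨c, rfl⟩ := hx
  exact ⟨c, by push_cast; rfl⟩

theorem isUnit_of_isUnit_castHom {q p : ℕ} {x : ZMod (q * p)}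
    (hq : IsUnit (castHom (dvd_mul_right q p) (ZMod q) x))
    (hp : IsUnit (castHom (dvd_mul_left p q) (ZMod p) x)) : IsUnit x := by
  obtain ⟨X, rfl⟩ := intCast_surjective x
  rw [map_intCast, coe_int_isUnit_iff_isCoprime] at hq hp
  rw [coe_int_isUnit_iff_isCoprime]
  exact_mod_cast hq.mul_left hp

variable {q p : ℕ} {d : ℤ}

theorem exists_natCast_mul_mul_intCast_mul_eq (hd : IsCoprime d p) :
    ∃ w : ℤ, ∀ c : ZMod (q * p), q * c * d * w = q * c := by
  obtain ⟨w, z, hwz⟩ := hd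
  have hwz' : (w : ZMod (q * p)) * d + z * p = 1 := by
    exact_mod_cast congrArg (Int.cast : ℤ → ZMod (q * p)) hwz
  have hqp : (q : ZMod (q * p)) * p = 0 := by exact_mod_cast natCast_self (q * p)
  exact ⟨w, fun c ↦ by linear_combination (q * c : ZMod (q * p)) * hwz' - c * z * hqp⟩

theorem eq_of_mul_intCast_eq_of_castHom_eq (hd : IsCoprime d p) {x y : ZMod (q * p)}
    (hmul : x * d = y * d)
    (hcast : castHom (dvd_mul_right q p) (ZMod q) x = castHom (dvd_mul_right q p) (ZMod q) y) :
    x = y := by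
  rw [← sub_eq_zero, ← map_sub] at hcast
  obtain ⟨c, hc⟩ := exists_eq_natCast_mul_of_castHom_eq_zero _ hcast
  obtain ⟨w, hw⟩ := exists_natCast_mul_mul_intCast_mul_eq (q := q) hd
  linear_combination (1 - d * w : ZMod (q * p)) * hc + w * hmul - hw c

theorem exists_castHom_eq_and_mul_intCast_eq (hd : IsCoprime d p) (x y : ZMod (q * p))
    (h : castHom (dvd_mul_right q p) (ZMod q) (x * d) = castHom (dvd_mul_right q p) (ZMod q) y) :
    ∃ a, castHom (dvd_mul_right q p) (ZMod q) a = castHom (dvd_mul_right q p) (ZMod q) x ∧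
      a * d = y := by
  rw [eq_comm, ← sub_eq_zero, ← map_sub] at h
  obtain ⟨c, hc⟩ := exists_eq_natCast_mul_of_castHom_eq_zero _ h
  obtain ⟨w, hw⟩ := exists_natCast_mul_mul_intCast_mul_eq (q := q) hd
  refine ⟨x + q * c * w, by simp, ?_⟩
  linear_combination hw c - hc

end ZMod
open ZMod

def invPairs (q p : ℕ) (d m n : ℤ) : Set (ZMod (q * p) × ZMod (q * p)) :=
  {ab | ab.1 * ab.2 = 1 ∧ ab.1 * d = m ∧ castHom (dvd_mul_right q p) (ZMod q) ab.2 = n}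

variable {q p : ℕ} {d m n : ℤ}

theorem invPairs_subsingleton (hd : IsCoprime d p) : (invPairs q p d m n).Subsingleton := by
  rintro ⟨a, b⟩ ⟨hab : a * b = 1, had : a * d = m, hb⟩
    ⟨a', b'⟩ ⟨hab' : a' * b' = 1, had', hb'⟩
  set π := castHom (dvd_mul_right q p) (ZMod q)
  have hπ : π a = π a' := left_inv_eq_right_inv (a := π b)
    (by rw [← map_mul, hab, map_one])
    (by rw [hb, ← hb', ← map_mul, mul_comm b' a', hab', map_one])
  obtain rfl : a = a' := eq_of_mul_intCast_eq_of_castHom_eq hd (had.trans had'.symm) hπ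
  obtain rfl : b = b' := left_inv_eq_right_inv (a := a) ((mul_comm b a).trans hab) hab'
  rfl

theorem conditions_of_mem_invPairs (hd : IsCoprime d p) {ab : ZMod (q * p) × ZMod (q * p)}
    (h : ab ∈ invPairs q p d m n) :
    IsUnit (n : ZMod q) ∧ IsUnit (m : ZMod p) ∧ (m * n : ZMod q) = d := by
  obtain ⟨hab : ab.1 * ab.2 = 1, had : ab.1 * d = m, hb⟩ := h
  set π := castHom (dvd_mul_right q p) (ZMod q)
  set ρ := castHom (dvd_mul_left p q) (ZMod p)
  have hadq : π ab.1 * d = m := by simpa only [map_mul, map_intCast] using congrArg π had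
  have hadp : ρ ab.1 * d = m := by simpa only [map_mul, map_intCast] using congrArg ρ had
  have habq : π ab.1 * n = 1 := by rw [← hb, ← map_mul, hab, map_one]
  refine ⟨.of_mul_eq_one_right _ habq, ?_, by linear_combination d * habq - n * hadq⟩
  rw [← hadp]
  exact ((IsUnit.of_mul_eq_one _ hab).map ρ).mul
    ((coe_int_isUnit_iff_isCoprime d p).2 hd.symm)

theorem invPairs_nonempty (hd : IsCoprime d p) (hn : IsUnit (n : ZMod q))
    (hm : IsUnit (m : ZMod p)) (hmn : (m * n : ZMod q) = d) : (invPairs q p d m n).Nonempty := by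
  set π := castHom (dvd_mul_right q p) (ZMod q)
  set ρ := castHom (dvd_mul_left p q) (ZMod p)
  obtain ⟨u, hu⟩ := hn.exists_left_inv
  obtain ⟨x, hx⟩ := castHom_surjective (dvd_mul_right q p) u
  obtain ⟨a, hπa, had⟩ := exists_castHom_eq_and_mul_intCast_eq hd x m <| by
    rw [map_mul, map_intCast, map_intCast, hx]
    linear_combination m * hu - u * hmn
  have hadp : ρ a * d = m := by simpa only [map_mul, map_intCast] using congrArg ρ had
  have ha : IsUnit a :=
    isUnit_of_isUnit_castHom (by rw [hπa, hx]; exact .of_mul_eq_one n hu)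
    (isUnit_of_mul_isUnit_left (y := (d : ZMod p)) (hadp ▸ hm))
  refine ⟨(a, ↑ha.unit⁻¹), ha.mul_val_inv, had, left_inv_eq_right_inv (a := π a) ?_ ?_⟩
  · rw [← map_mul, ha.val_inv_mul, map_one]
  · rw [hπa, hx, hu]

theorem invPairs_nonempty_iff (hd : IsCoprime d p) :
    (invPairs q p d m n).Nonempty ↔
      Int.gcd n q = 1 ∧ Int.gcd m p = 1 ∧ m * n % q = d % q := by
  rw [← isUnit_intCast_iff_gcd_eq_one, ← isUnit_intCast_iff_gcd_eq_one,
    ← intCast_eq_intCast_iff', Int.cast_mul]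
  exact ⟨fun ⟨_, h⟩ ↦ conditions_of_mem_invPairs hd h,
    fun ⟨hn, hm, hmn⟩ ↦ invPairs_nonempty hd hn hm hmn⟩

theorem count_pairs_mod_qp_q_general (p q : ℕ) (d m n : ℤ)
    (hd : Int.gcd d (p : ℤ) = 1) :
    Nat.card {ab : ZMod (q * p) × ZMod (q * p) //
        ab.1 * ab.2 = 1 ∧
        ab.1 * (d : ZMod (q * p)) = (m : ZMod (q * p)) ∧
        ZMod.castHom (dvd_mul_right q p) (ZMod q) ab.2 = (n : ZMod q)}
      = if Int.gcd n (q : ℤ) = 1 ∧ Int.gcd m (p : ℤ) = 1 ∧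
            (m * n) % (q : ℤ) = d % (q : ℤ) then 1
        else 0 := by
  rw [← Int.isCoprime_iff_gcd_eq_one] at hd
  change Nat.card (invPairs q p d m n) = _
  have := (invPairs_subsingleton (q := q) (m := m) (n := n) hd).coe_sort
  split_ifs with h
  · have := ((invPairs_nonempty_iff hd).2 h).coe_sort
    exact Nat.card_unique
  · rw [Set.not_nonempty_iff_eq_empty.1 (mt (invPairs_nonempty_iff hd).1 h)]
    exact Nat.card_of_isEmpty

/-- Let `p` be a prime, `q ≥ 1`, and `d, m, n` integers with `gcd(d,p) = 1`.  The number of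
pairs `(a,b)` of residues modulo `qp` with `ab ≡ 1 (mod qp)`, `ad ≡ m (mod qp)` and
`b ≡ n (mod q)` equals `1` if `gcd(n,q) = 1`, `gcd(m,p) = 1` and `mn ≡ d (mod q)`, and `0`
otherwise. -/
theorem count_pairs_mod_qp_q (p q : ℕ) (hp : p.Prime) (hq : 0 < q) (d m n : ℤ)
    (hd : Int.gcd d (p : ℤ) = 1) :
    Nat.card {ab : ZMod (q * p) × ZMod (q * p) //
        ab.1 * ab.2 = 1 ∧
        ab.1 * (d : ZMod (q * p)) = (m : ZMod (q * p)) ∧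
        ZMod.castHom (dvd_mul_right q p) (ZMod q) ab.2 = (n : ZMod q)}
      = if Int.gcd n (q : ℤ) = 1 ∧ Int.gcd m (p : ℤ) = 1 ∧
            (m * n) % (q : ℤ) = d % (q : ℤ) then 1
        else 0 :=
  count_pairs_mod_qp_q_general p q d m n hd
end

section
/- There is an absolute constant \(C>0\) such that for every prime \(p\), all integers \(d\geq 1\), \(k\geq 1\), and every real \(t\neq 0\) (write \(T=3+|t|\)): \(\Bigl|\frac{p^{2it}-1}{p}\cdot\frac{\zeta(1-2it)}{(2\pi\sqrt{d/p})^{\,1-2it}}\cdot\frac{\Gamma(k-it)}{\Gamma(k+it)}\Bigr| \;\leq\; C\,\frac{\log(pT)}{\sqrt{dp}}\). -/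
/-!
The Gamma quotient has modulus one since `Γ (conj z) = conj (Γ z)`, and the exponential has
modulus `2π √(d/p)`, so everything reduces to
`|p^{2it} - 1| · |ζ(1 - 2it)| ≪ log (p (3 + |t|))`.
Abel summation applied to the tail `n > K` of the Dirichlet series gives, for `Re s > 1`,
`ζ(s) = ∑_{n ≤ K} n^{-s} + K^{1-s}/(s-1) - s ∫_K^∞ {x} x^{-s-1} dx`;
both sides are continuous up to the line `Re s = 1` away from `s = 1`.
Choosing `K = ⌊|τ|⌋ + 1` yields
`|ζ(1 + iτ)| ≤ 3 + log (1 + |τ|) + 1/|τ|`, and the pole term `1/|τ|` is absorbed by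
`|p^{2it} - 1| ≤ 2 |t| log p`.
-/

open MeasureTheory Set Filter Topology Complex

noncomputable def fractCpowIntegral (a : ℝ) (s : ℂ) : ℂ :=
  ∫ x in Ioi a, ((Int.fract x : ℝ) : ℂ) * (x : ℂ) ^ (-s - 1)

lemma norm_fract_mul_cpow_le (s : ℂ) {x : ℝ} (hx : 0 < x) :
    ‖((Int.fract x : ℝ) : ℂ) * (x : ℂ) ^ (-s - 1)‖ ≤ x ^ (-s.re - 1) := by
  rw [norm_mul, norm_real, Real.norm_of_nonneg (Int.fract_nonneg x),
    norm_cpow_eq_rpow_re_of_pos hx, sub_re, neg_re, one_re]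
  exact mul_le_of_le_one_left (by positivity) (Int.fract_lt_one x).le

lemma aestronglyMeasurable_fract_mul_cpow (s : ℂ) {a : ℝ} (ha : 0 ≤ a) :
    AEStronglyMeasurable (fun x : ℝ ↦ ((Int.fract x : ℝ) : ℂ) * (x : ℂ) ^ (-s - 1))
      (volume.restrict (Ioi a)) :=
  (continuous_ofReal.measurable.comp measurable_fract).aestronglyMeasurable.mul <|
    ContinuousOn.aestronglyMeasurable (fun x hx ↦ (continuousAt_ofReal_cpow_const x _
      (Or.inr (ha.trans_lt hx).ne')).continuousWithinAt) measurableSet_Ioi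

lemma integrableOn_fract_mul_cpow {s : ℂ} (hs : 0 < s.re) {a : ℝ} (ha : 0 < a) :
    IntegrableOn (fun x : ℝ ↦ ((Int.fract x : ℝ) : ℂ) * (x : ℂ) ^ (-s - 1)) (Ioi a) :=
  (integrableOn_Ioi_rpow_of_lt (by linarith) ha).mono'
    (aestronglyMeasurable_fract_mul_cpow s ha.le)
    ((ae_restrict_mem measurableSet_Ioi).mono fun x hx ↦ norm_fract_mul_cpow_le s (ha.trans hx))

lemma norm_fractCpowIntegral_le {s : ℂ} (hs : 0 < s.re) {a : ℝ} (ha : 0 < a) :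
    ‖fractCpowIntegral a s‖ ≤ a ^ (-s.re) / s.re := by
  have hbound := norm_integral_le_of_norm_le (integrableOn_Ioi_rpow_of_lt (by linarith) ha)
    ((ae_restrict_mem measurableSet_Ioi).mono fun x (hx : a < x) ↦
      norm_fract_mul_cpow_le s (ha.trans hx))
  rw [integral_Ioi_rpow_of_lt (by linarith) ha] at hbound
  refine hbound.trans_eq ?_
  rw [sub_add_cancel, div_neg, neg_div, neg_neg]

lemma continuousAt_fractCpowIntegral {s : ℂ} (hs : 0 < s.re) {a : ℝ} (ha : 1 ≤ a) :
    ContinuousAt (fractCpowIntegral a) s := by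
  have ha0 : 0 < a := one_pos.trans_le ha
  have hnear : ∀ᶠ z in 𝓝 s, s.re / 2 < z.re :=
    continuous_re.continuousAt.eventually (lt_mem_nhds (by linarith))
  refine continuousAt_of_dominated (bound := fun x ↦ x ^ (-(s.re / 2) - 1))
    (Eventually.of_forall fun z ↦ aestronglyMeasurable_fract_mul_cpow z ha0.le) ?_
    (integrableOn_Ioi_rpow_of_lt (by linarith) ha0) ?_
  · filter_upwards [hnear] with z hz
    filter_upwards [ae_restrict_mem measurableSet_Ioi] with x (hx : a < x)
    exact (norm_fract_mul_cpow_le z (ha0.trans hx)).trans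
      (Real.rpow_le_rpow_of_exponent_le (ha.trans hx.le) (by linarith))
  · filter_upwards [ae_restrict_mem measurableSet_Ioi] with x (hx : a < x)
    have hx0 : (x : ℂ) ≠ 0 := ofReal_ne_zero.mpr (ha0.trans hx).ne'
    exact continuousAt_const.mul <|
      (continuousAt_const_cpow hx0).comp (continuousAt_id.neg.sub continuousAt_const)

lemma sum_Icc_ite_lt (K m : ℕ) :
    ∑ k ∈ Finset.Icc 1 m, (if K < k then (1 : ℂ) else 0) = ((m - K : ℕ) : ℂ) := by
  rw [Finset.sum_boole, ← Nat.card_Ioc K m]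
  congr 2
  ext k
  simp only [Finset.mem_filter, Finset.mem_Icc, Finset.mem_Ioc]
  omega

lemma LSeries_ite_lt_eq_riemannZeta_sub {s : ℂ} (hs : 1 < s.re) (K : ℕ) :
    LSeries (fun n ↦ if K < n then 1 else 0) s
      = riemannZeta s - ∑ n ∈ Finset.Icc 1 K, (n : ℂ) ^ (-s) := by
  set f : ℕ → ℂ := fun n ↦ if K < n then 1 else 0
  have hvanish : ∀ n ∉ Finset.Icc 1 K, LSeries.term 1 s n - LSeries.term f s n = 0 := by
    intro n hn
    rw [Finset.mem_Icc, not_and_or, not_le, not_le, Nat.lt_one_iff] at hn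
    rcases hn with rfl | hn
    · simp
    · have hn0 : n ≠ 0 := by omega
      simp [LSeries.term_of_ne_zero hn0, f, hn]
  have hhead : HasSum _ _ := hasSum_sum_of_ne_finset_zero hvanish
  have hhead_sum : ∑ n ∈ Finset.Icc 1 K, (LSeries.term 1 s n - LSeries.term f s n)
      = ∑ n ∈ Finset.Icc 1 K, (n : ℂ) ^ (-s) := by
    refine Finset.sum_congr rfl fun n hn ↦ ?_
    obtain ⟨hn1, hnK⟩ := Finset.mem_Icc.mp hn
    have hn0 : n ≠ 0 := by omega
    simp [LSeries.term_of_ne_zero hn0, f, hnK.not_gt, cpow_neg]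
  rw [hhead_sum] at hhead
  have htail : HasSum (LSeries.term f s)
      (riemannZeta s - ∑ n ∈ Finset.Icc 1 K, (n : ℂ) ^ (-s)) := by
    simpa only [sub_sub_cancel] using HasSum.sub (LSeriesHasSum_one hs) hhead
  exact htail.tsum_eq

lemma integral_Ioi_sum_ite_lt_mul_cpow {s : ℂ} (hs : 1 < s.re) {K : ℕ} (hK : 1 ≤ K) :
    ∫ t in Ioi (1 : ℝ),
        (∑ k ∈ Finset.Icc 1 ⌊t⌋₊, (if K < k then (1 : ℂ) else 0)) * t ^ (-(s + 1))
      = (K : ℂ) ^ (1 - s) / (s - 1) - (K : ℂ) ^ (1 - s) / s - fractCpowIntegral K s := by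
  have hK0 : (0 : ℝ) < K := by exact_mod_cast hK
  rw [setIntegral_eq_of_subset_of_forall_sdiff_eq_zero (s := Ioi (K : ℝ)) measurableSet_Ioi
      (Ioi_subset_Ioi (by exact_mod_cast hK)) fun t ht ↦ ?_,
    setIntegral_congr_fun measurableSet_Ioi (g := fun t : ℝ ↦ (t : ℂ) ^ (-s)
        - K * (t : ℂ) ^ (-s - 1) - ((Int.fract t : ℝ) : ℂ) * (t : ℂ) ^ (-s - 1))
      fun t ht ↦ ?_]
  · have hint_s : IntegrableOn (fun t : ℝ ↦ (t : ℂ) ^ (-s)) (Ioi (K : ℝ)) :=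
      integrableOn_Ioi_cpow_of_lt (by simp; linarith) hK0
    have hint_s1 : IntegrableOn (fun t : ℝ ↦ (t : ℂ) ^ (-s - 1)) (Ioi (K : ℝ)) :=
      integrableOn_Ioi_cpow_of_lt (by simp; linarith) hK0
    have hint_diff : IntegrableOn (fun t : ℝ ↦ (t : ℂ) ^ (-s) - K * (t : ℂ) ^ (-s - 1))
        (Ioi (K : ℝ)) := hint_s.sub (hint_s1.const_mul _)
    rw [integral_sub hint_diff (integrableOn_fract_mul_cpow (by linarith) hK0),
      integral_sub hint_s (hint_s1.const_mul _), integral_const_mul,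
      integral_Ioi_cpow_of_lt (by simp; linarith) hK0,
      integral_Ioi_cpow_of_lt (by simp; linarith) hK0, fractCpowIntegral]
    have hKc : (K : ℂ) ≠ 0 := by exact_mod_cast hK0.ne'
    have hKpow : (K : ℂ) * (K : ℂ) ^ (-s) = (K : ℂ) ^ (1 - s) := by
      rw [sub_eq_add_neg, cpow_add _ _ hKc, cpow_one]
    rw [show -s - 1 + 1 = -s by ring, ofReal_natCast, show -s + 1 = 1 - s by ring, ← hKpow,
      show (1 : ℂ) - s = -(s - 1) by ring, div_neg]
    ring
  · have ht0 : 0 < t := hK0.trans ht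
    have htc : (t : ℂ) ≠ 0 := ofReal_ne_zero.mpr ht0.ne'
    have hpow : (t : ℂ) ^ (-s) = t * (t : ℂ) ^ (-s - 1) := by
      rw [← sub_add_cancel (-s) 1, cpow_add _ _ htc, cpow_one, sub_add_cancel, mul_comm]
    rw [sum_Icc_ite_lt, Nat.cast_sub (Nat.le_floor (le_of_lt ht)), ← ofReal_natCast,
      natCast_floor_eq_intCast_floor ht0.le, ← Int.self_sub_fract, neg_add']
    beta_reduce
    rw [hpow]
    push_cast
    ring
  · rw [sum_Icc_ite_lt, Nat.sub_eq_zero_of_le (Nat.floor_le_of_le (not_lt.mp ht.2)),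
      Nat.cast_zero, zero_mul]

theorem riemannZeta_eq_sum_add_sub_fractCpowIntegral {s : ℂ} (hs : 1 < s.re) {K : ℕ}
    (hK : 1 ≤ K) :
    riemannZeta s = ∑ n ∈ Finset.Icc 1 K, (n : ℂ) ^ (-s) + (K : ℂ) ^ (1 - s) / (s - 1)
      - s * fractCpowIntegral K s := by
  have hs0 : s ≠ 0 := by rintro rfl; norm_num at hs
  have hs1 : s - 1 ≠ 0 := by rintro h; rw [sub_eq_zero] at h; norm_num [h] at hs
  have hO : (fun n ↦ ∑ k ∈ Finset.Icc 1 n, ‖(if K < k then (1 : ℂ) else 0)‖)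
      =O[atTop] fun n ↦ (n : ℝ) ^ (1 : ℝ) := by
    refine Asymptotics.isBigO_of_le _ fun n ↦ ?_
    rw [Real.rpow_one, Real.norm_natCast, Real.norm_of_nonneg (by positivity)]
    calc ∑ k ∈ Finset.Icc 1 n, ‖(if K < k then (1 : ℂ) else 0)‖
        ≤ ∑ k ∈ Finset.Icc 1 n, (1 : ℝ) :=
          Finset.sum_le_sum fun k _ ↦ by split_ifs <;> simp
      _ = n := by simp
  have hrep := LSeries_eq_mul_integral' _ zero_le_one (by linarith) hO
  rw [LSeries_ite_lt_eq_riemannZeta_sub hs, integral_Ioi_sum_ite_lt_mul_cpow hs hK] at hrep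
  rw [sub_eq_iff_eq_add] at hrep
  rw [hrep]
  field_simp
  ring


theorem riemannZeta_eq_sum_add_sub_fractCpowIntegral_of_one_le_re {s : ℂ} (hs : 1 ≤ s.re)
    (hs1 : s ≠ 1) {K : ℕ} (hK : 1 ≤ K) :
    riemannZeta s = ∑ n ∈ Finset.Icc 1 K, (n : ℂ) ^ (-s) + (K : ℂ) ^ (1 - s) / (s - 1)
      - s * fractCpowIntegral K s := by
  have hK0 : (K : ℂ) ≠ 0 := by exact_mod_cast (by omega : K ≠ 0)
  have hζ : ContinuousAt riemannZeta s := (differentiableAt_riemannZeta hs1).continuousAt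
  have hrhs : ContinuousAt (fun z ↦ ∑ n ∈ Finset.Icc 1 K, (n : ℂ) ^ (-z)
      + (K : ℂ) ^ (1 - z) / (z - 1) - z * fractCpowIntegral K z) s := by
    refine (((continuous_finsetSum _ fun n hn ↦ ?_).continuousAt).add ?_).sub
      (continuousAt_id.mul (continuousAt_fractCpowIntegral (by linarith) (by exact_mod_cast hK)))
    · have hn0 : (n : ℂ) ≠ 0 :=
        Nat.cast_ne_zero.mpr (Nat.one_le_iff_ne_zero.mp (Finset.mem_Icc.mp hn).1)
      exact continuous_id.neg.const_cpow (Or.inl hn0)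
    · exact (continuousAt_const.sub continuousAt_id).const_cpow (Or.inl hK0) |>.div
        (continuousAt_id.sub continuousAt_const) (sub_ne_zero.mpr hs1)
  have hbot : (𝓝[{z : ℂ | 1 < z.re}] s).NeBot := by
    rw [← mem_closure_iff_nhdsWithin_neBot, closure_setOfPred_lt_re]
    exact hs
  have heq : riemannZeta =ᶠ[𝓝[{z : ℂ | 1 < z.re}] s] fun z ↦ ∑ n ∈ Finset.Icc 1 K,
      (n : ℂ) ^ (-z) + (K : ℂ) ^ (1 - z) / (z - 1) - z * fractCpowIntegral K z :=
    eventually_nhdsWithin_of_forall fun z hz ↦ riemannZeta_eq_sum_add_sub_fractCpowIntegral hz hK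
  exact tendsto_nhds_unique_of_eventuallyEq (hζ.tendsto.mono_left nhdsWithin_le_nhds)
    (hrhs.tendsto.mono_left nhdsWithin_le_nhds) heq

lemma norm_sum_Icc_cpow_neg_le {s : ℂ} (hs : s.re = 1) (K : ℕ) :
    ‖∑ n ∈ Finset.Icc 1 K, (n : ℂ) ^ (-s)‖ ≤ 1 + Real.log K := by
  calc ‖∑ n ∈ Finset.Icc 1 K, (n : ℂ) ^ (-s)‖
      ≤ ∑ n ∈ Finset.Icc 1 K, ‖(n : ℂ) ^ (-s)‖ := norm_sum_le _ _
    _ = harmonic K := by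
      rw [harmonic_eq_sum_Icc]
      push_cast
      refine Finset.sum_congr rfl fun n hn ↦ ?_
      rw [norm_natCast_cpow_of_pos (Finset.mem_Icc.mp hn).1, neg_re, hs, Real.rpow_neg_one]
    _ ≤ 1 + Real.log K := harmonic_le_one_add_log K

theorem norm_riemannZeta_le_of_re_eq_one {s : ℂ} (hs : s.re = 1) (him : s.im ≠ 0) :
    ‖riemannZeta s‖ ≤ 3 + Real.log (1 + |s.im|) + 1 / |s.im| := by
  set K := ⌊|s.im|⌋₊ + 1
  have hKim : |s.im| < K := by push_cast [K]; exact Nat.lt_floor_add_one _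
  have hKle : (K : ℝ) ≤ 1 + |s.im| := by
    push_cast [K]; linarith [Nat.floor_le (abs_nonneg s.im)]
  have hK1 : (1 : ℝ) ≤ K := by exact_mod_cast Nat.le_add_left 1 _
  have hK0 : (0 : ℝ) < K := one_pos.trans_le hK1
  have hs1 : s - 1 = s.im * I := Complex.ext (by simp [hs]) (by simp)
  have hpole : ‖(K : ℂ) ^ (1 - s) / (s - 1)‖ = 1 / |s.im| := by
    rw [norm_div, norm_natCast_cpow_of_pos (Nat.succ_pos _), sub_re, one_re, hs, sub_self,
      Real.rpow_zero, hs1, norm_mul, norm_real, norm_I, mul_one, Real.norm_eq_abs]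
  have htail : ‖s * fractCpowIntegral K s‖ ≤ 2 := by
    have hint := norm_fractCpowIntegral_le (s := s) (by rw [hs]; exact one_pos) hK0
    rw [hs, Real.rpow_neg_one, div_one] at hint
    calc ‖s * fractCpowIntegral K s‖ ≤ (1 + |s.im|) * (K : ℝ)⁻¹ := by
          rw [norm_mul]
          gcongr
          simpa [hs] using norm_le_abs_re_add_abs_im s
      _ ≤ 2 := by
          rw [mul_inv_le_iff₀ hK0]
          linarith
  rw [riemannZeta_eq_sum_add_sub_fractCpowIntegral_of_one_le_re hs.ge
    (fun h ↦ him (by simp [h])) (Nat.le_add_left 1 _)]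
  calc _ ≤ ‖∑ n ∈ Finset.Icc 1 K, (n : ℂ) ^ (-s)‖ + ‖(K : ℂ) ^ (1 - s) / (s - 1)‖
        + ‖s * fractCpowIntegral K s‖ := norm_sub_le_of_le (norm_add_le _ _) le_rfl
    _ ≤ (1 + Real.log (1 + |s.im|)) + 1 / |s.im| + 2 := by
        rw [hpole]
        gcongr
        exact (norm_sum_Icc_cpow_neg_le hs K).trans (by gcongr)
    _ = 3 + Real.log (1 + |s.im|) + 1 / |s.im| := by ring

lemma norm_Gamma_conj_div_Gamma {z : ℂ} (hz : Gamma z ≠ 0) :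
    ‖Gamma (starRingEnd ℂ z) / Gamma z‖ = 1 := by
  rw [Gamma_conj, norm_div, norm_conj, div_self (norm_ne_zero_iff.mpr hz)]

lemma norm_exp_mul_ofReal_log {x : ℝ} (hx : 0 < x) (z : ℂ) :
    ‖exp (z * Real.log x)‖ = x ^ z.re := by
  rw [norm_exp, re_mul_ofReal, Real.rpow_def_of_pos hx, mul_comm]

lemma norm_exp_I_mul_ofReal_sub_one_le_two (θ : ℝ) : ‖exp (I * θ) - 1‖ ≤ 2 := by
  calc ‖exp (I * θ) - 1‖ ≤ ‖exp (θ * I)‖ + ‖(1 : ℂ)‖ :=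
        mul_comm I θ ▸ norm_sub_le _ _
    _ = 2 := by rw [norm_exp_ofReal_mul_I, norm_one]; norm_num

lemma one_le_log_three_add_abs (t : ℝ) : 1 ≤ Real.log (3 + |t|) := by
  rw [Real.le_log_iff_exp_le (by positivity)]
  linarith [Real.exp_one_lt_d9, abs_nonneg t]

lemma norm_exp_sub_one_mul_norm_riemannZeta_le {x : ℝ} (hx : 1 ≤ x) {t : ℝ} (ht : t ≠ 0) :
    ‖exp (2 * I * t * Real.log x) - 1‖ * ‖riemannZeta (1 - 2 * I * t)‖
      ≤ 10 * Real.log (x * (3 + |t|)) := by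
  have hlogx : 0 ≤ Real.log x := Real.log_nonneg hx
  have hexp : exp (2 * I * t * Real.log x) = exp (I * ↑(2 * t * Real.log x)) := by
    push_cast; ring_nf
  set E := ‖exp (2 * I * t * Real.log x) - 1‖
  have hE2 : E ≤ 2 := by
    simpa only [E, hexp] using norm_exp_I_mul_ofReal_sub_one_le_two (2 * t * Real.log x)
  have hEt : E ≤ 2 * |t| * Real.log x := by
    simp only [E, hexp]
    refine Real.norm_exp_I_mul_ofReal_sub_one_le.trans_eq ?_
    rw [Real.norm_eq_abs, abs_mul, abs_mul, abs_two, abs_of_nonneg hlogx]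
  have hZ :=
    norm_riemannZeta_le_of_re_eq_one (s := 1 - 2 * I * t) (by simp) (by simpa using ht)
  have him : |(1 - 2 * I * t).im| = 2 * |t| := by simp [abs_mul]
  rw [him] at hZ
  have ht0 : 0 < |t| := abs_pos.mpr ht
  have hlog_im : Real.log (1 + 2 * |t|) ≤ 2 * Real.log (3 + |t|) := by
    calc Real.log (1 + 2 * |t|) ≤ Real.log ((3 + |t|) ^ 2) :=
          Real.log_le_log (by positivity) (by nlinarith)
      _ = 2 * Real.log (3 + |t|) := by rw [Real.log_pow]; norm_num
  have hE_div : E * (1 / (2 * |t|)) ≤ Real.log x := by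
    rw [mul_one_div, div_le_iff₀ (by positivity)]
    linarith
  have hL := one_le_log_three_add_abs t
  calc E * ‖riemannZeta (1 - 2 * I * t)‖
      ≤ E * (3 + Real.log (1 + 2 * |t|)) + E * (1 / (2 * |t|)) := by
        rw [← mul_add]; gcongr
    _ ≤ 2 * (3 + 2 * Real.log (3 + |t|)) + Real.log x := by
        gcongr
        linarith [Real.log_nonneg (by linarith : (1 : ℝ) ≤ 1 + 2 * |t|)]
    _ ≤ 10 * Real.log (x * (3 + |t|)) := by
        rw [Real.log_mul (by positivity) (by positivity)]
        linarith

lemma mul_sqrt_div_eq_sqrt_mul (x : ℝ) {y : ℝ} (hy : 0 < y) : y * √(x / y) = √(x * y) := by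
  rw [← Real.sqrt_sq hy.le, ← Real.sqrt_mul (sq_nonneg y), Real.sqrt_sq hy.le]
  congr 1
  field_simp

/-- There is an absolute constant `C > 0` such that for every prime `p`, all integers
`d ≥ 1`, `k ≥ 1`, and every real `t ≠ 0` (with `T = 3 + |t|`):
`| (p^{2it}-1)/p · ζ(1-2it)/(2π√(d/p))^{1-2it} · Γ(k-it)/Γ(k+it) | ≤ C log(pT)/√(dp)`. -/
theorem E3_bound :
    ∃ C : ℝ, 0 < C ∧ ∀ (p d k : ℕ) (t : ℝ), p.Prime → 1 ≤ d → 1 ≤ k → t ≠ 0 →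
      ‖(Complex.exp (2 * Complex.I * t * Real.log p) - 1) / (p : ℂ) *
          (riemannZeta (1 - 2 * Complex.I * t) /
            Complex.exp ((1 - 2 * Complex.I * t) *
              Real.log (2 * Real.pi * Real.sqrt ((d : ℝ) / p)))) *
          (Complex.Gamma ((k : ℂ) - Complex.I * t) / Complex.Gamma ((k : ℂ) + Complex.I * t))‖
        ≤ C * Real.log ((p : ℝ) * (3 + |t|)) / Real.sqrt ((d : ℝ) * p) := by
  refine ⟨10, by norm_num, fun p d k t hp hd hk ht ↦ ?_⟩
  have hp1 : (1 : ℝ) ≤ p := by exact_mod_cast hp.one_lt.le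
  have hp0 : (0 : ℝ) < p := one_pos.trans_le hp1
  have hd0 : (0 : ℝ) < d := by exact_mod_cast hd
  have hconj : (k : ℂ) - I * t = starRingEnd ℂ ((k : ℂ) + I * t) := by simp [sub_eq_add_neg]
  have hΓ : Gamma ((k : ℂ) + I * t) ≠ 0 :=
    Gamma_ne_zero_of_re_pos (by simpa using Nat.pos_of_ne_zero (by omega))
  rw [norm_mul, norm_mul, hconj, norm_Gamma_conj_div_Gamma hΓ, norm_div, norm_div,
    norm_exp_mul_ofReal_log (by positivity), Complex.norm_natCast, mul_one,
    show (1 - 2 * I * t).re = 1 by simp, Real.rpow_one, div_mul_div_comm,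
    mul_left_comm, mul_sqrt_div_eq_sqrt_mul _ hp0]
  have hsqrt : 0 < √(d * p : ℝ) := by positivity
  have hL : 0 ≤ Real.log (p * (3 + |t|)) :=
    Real.log_nonneg (by nlinarith [abs_nonneg t])
  calc _ ≤ 10 * Real.log (p * (3 + |t|)) / (2 * Real.pi * √(d * p)) :=
        div_le_div_of_nonneg_right (norm_exp_sub_one_mul_norm_riemannZeta_le hp1 ht)
          (by positivity)
    _ ≤ 10 * Real.log (p * (3 + |t|)) / √(d * p) :=
        div_le_div_of_nonneg_left (by positivity) hsqrt (by nlinarith [Real.pi_gt_three])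
end

section
/- Let \(q\) and \(P\) be positive integers and let \(s\in\mathbb{C}\) with \(\mathrm{Re}\,s>1\). Then \(\sum_{\substack{b=1\\ \gcd(b,qP)=1}}^{qP}\;\sum_{n=1}^{\infty}\frac{e^{2\pi i\,nb/q}}{n^{s}} \;=\; \zeta(s)\,\phi(qP)\sum_{m\mid q}\frac{\mu(m)}{\phi(m)}\Bigl(\frac{m}{q}\Bigr)^{s}\sum_{a\mid m}\frac{\mu(a)}{a^{s}}\), where the double sum on the left converges absolutely. -/
/-!
Möbius inversion of the condition `gcd(b, qP) = 1` turns the sum over `b` of `e(nb/q)` into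
`∑_{t ∣ qP} μ(t) (qP/t) [q/(q,t) ∣ n]`, so the left side equals
`ζ(s) ∑_{t ∣ qP} μ(t) (qP/t) (q/(q,t))^{-s}`.
On the right, `∑_{t ∣ qP, m ∣ t} μ(t) qP/t = μ(m) φ(qP)/φ(m)` (both sides of
`(μ·1_{(·,m)=1}) * id = φ(m ·)/φ(m)` are multiplicative and agree at prime powers) and
`∑_{m ∣ g} m^s ∑_{a ∣ m} μ(a) a^{-s} = g^s` bring the double sum over `m` and `a` to the same form.
-/

open Finset ArithmeticFunction
open scoped Nat ArithmeticFunction.Moebius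

theorem sum_Icc_pow_of_pow_eq_one {R : Type*} [CommRing R] [IsDomain R] [DecidableEq R] {w : R}
    {K : ℕ} (hw : w ^ K = 1) : ∑ c ∈ Icc 1 K, w ^ c = if w = 1 then (K : R) else 0 := by
  split_ifs with h
  · simp [h]
  have hshift : ∑ c ∈ Icc 1 K, w ^ c = w * ∑ c ∈ range K, w ^ c := by
    rw [mul_sum, ← Ico_add_one_right_eq_Icc, sum_Ico_eq_sum_range]
    simp [pow_succ', add_comm]
  have hgeom := geom_sum_mul w K
  rw [hw, sub_self, mul_eq_zero] at hgeom
  rw [hshift, hgeom.resolve_right (sub_ne_zero.mpr h), mul_zero]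

theorem Icc_one_filter_dvd_eq_image {t M : ℕ} (ht : t ∣ M) :
    {b ∈ Icc 1 M | t ∣ b} = (Icc 1 (M / t)).image (t * ·) := by
  obtain ⟨N, rfl⟩ := ht
  rcases Nat.eq_zero_or_pos t with rfl | ht
  · simp
  ext b
  simp only [mem_filter, mem_Icc, mem_image, Nat.mul_div_cancel_left N ht]
  constructor
  · rintro ⟨⟨hb1, hbN⟩, c, rfl⟩
    exact ⟨c, ⟨Nat.pos_of_ne_zero (by rintro rfl; simp at hb1), le_of_mul_le_mul_left hbN ht⟩,
      rfl⟩
  · rintro ⟨c, ⟨hc1, hcN⟩, rfl⟩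
    exact ⟨⟨Nat.one_le_iff_ne_zero.mpr (by positivity), Nat.mul_le_mul_left t hcN⟩,
      dvd_mul_right t c⟩

theorem Nat.divisors_filter_dvd_eq_image {m M : ℕ} (hm : m ∣ M) :
    {t ∈ M.divisors | m ∣ t} = (M / m).divisors.image (m * ·) := by
  obtain ⟨N, rfl⟩ := hm
  rcases Nat.eq_zero_or_pos m with rfl | hm
  · simp
  ext t
  simp only [mem_filter, Nat.mem_divisors, mem_image, Nat.mul_div_cancel_left N hm]
  constructor
  · rintro ⟨⟨htN, hN⟩, u, rfl⟩
    exact ⟨u, ⟨(mul_dvd_mul_iff_left hm.ne').mp htN, right_ne_zero_of_mul hN⟩, rfl⟩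
  · rintro ⟨u, ⟨huN, hN⟩, rfl⟩
    exact ⟨⟨mul_dvd_mul_left m huN, mul_ne_zero hm.ne' hN⟩, dvd_mul_right m u⟩

theorem ArithmeticFunction.sum_divisors_moebius (n : ℕ) :
    ∑ d ∈ n.divisors, (μ d : ℤ) = if n = 1 then 1 else 0 := by
  rw [← coe_mul_zeta_apply, moebius_mul_coe_zeta, one_apply]

theorem sum_coprime_pow_eq_sum_moebius {R : Type*} [CommRing R] [IsDomain R] [DecidableEq R]
    {z : R} {M : ℕ} (hz : z ^ M = 1) :
    ∑ b ∈ Icc 1 M with b.Coprime M, z ^ b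
      = ∑ t ∈ M.divisors, (μ t : R) * if z ^ t = 1 then ((M / t : ℕ) : R) else 0 := by
  rcases Nat.eq_zero_or_pos M with rfl | hM
  · simp
  have hcoprime : ∀ b ∈ Icc 1 M, (if b.Coprime M then z ^ b else 0)
      = ∑ t ∈ M.divisors, if t ∣ b then (μ t : R) * z ^ b else 0 := by
    intro b hb
    have hdiv : {t ∈ M.divisors | t ∣ b} = (b.gcd M).divisors := by
      rw [← Nat.divisors_filter_dvd_of_dvd hM.ne' (Nat.gcd_dvd_right b M)]
      exact filter_congr fun t ht => by simp [Nat.dvd_gcd_iff, Nat.dvd_of_mem_divisors ht]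
    rw [← sum_filter, ← sum_mul, hdiv, ← Int.cast_sum, sum_divisors_moebius]
    by_cases h : b.Coprime M <;> simp [h, Nat.coprime_iff_gcd_eq_one]
  rw [sum_filter, sum_congr rfl hcoprime, sum_comm]
  refine sum_congr rfl fun t ht => ?_
  have htM := Nat.dvd_of_mem_divisors ht
  rw [← sum_filter, Icc_one_filter_dvd_eq_image htM,
    sum_image fun x _ y _ h => Nat.eq_of_mul_eq_mul_left (Nat.pos_of_mem_divisors ht) h,
    ← mul_sum]
  simp_rw [pow_mul]
  rw [sum_Icc_pow_of_pow_eq_one (by rw [← pow_mul, Nat.mul_div_cancel' htM, hz])]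

theorem summable_div_succ_cpow {f : ℕ → ℂ} {C : ℝ} (hf : ∀ n, ‖f n‖ ≤ C) {s : ℂ}
    (hs : 1 < s.re) : Summable fun n : ℕ => f n / ((n + 1 : ℕ) : ℂ) ^ s := by
  have := (summable_nat_add_iff 1).mpr
    (LSeriesSummable_of_bounded_of_one_lt_re (f := fun n => f (n - 1)) (fun n _ => hf _) hs)
  simpa [LSeries.term_of_ne_zero] using this

theorem tsum_ite_dvd_div_cpow (e : ℕ) {s : ℂ} (hs : 1 < s.re) :
    ∑' n : ℕ, (if e ∣ n + 1 then 1 else 0) / ((n + 1 : ℕ) : ℂ) ^ s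
      = riemannZeta s / (e : ℂ) ^ s := by
  rcases Nat.eq_zero_or_pos e with rfl | he
  · have hs0 : s ≠ 0 := by rintro rfl; norm_num at hs
    simp [Complex.zero_cpow hs0]
  -- `k ↦ e * (k + 1) - 1` enumerates the `n` with `e ∣ n + 1`
  have hsucc : ∀ k : ℕ, e * (k + 1) - 1 + 1 = e * (k + 1) := fun k =>
    Nat.sub_add_cancel (Nat.one_le_iff_ne_zero.mpr (by positivity))
  have hinj : Function.Injective fun k : ℕ => e * (k + 1) - 1 := fun a b h => by
    have := congrArg (· + 1) h
    simp only [hsucc] at this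
    exact Nat.succ_injective (Nat.eq_of_mul_eq_mul_left he this)
  rw [← hinj.tsum_eq, zeta_eq_tsum_one_div_nat_add_one_cpow hs, div_eq_inv_mul, ← tsum_mul_left]
  · refine tsum_congr fun k => ?_
    simp only [hsucc, dvd_mul_right, if_true, Nat.cast_mul]
    rw [Complex.natCast_mul_natCast_cpow]
    push_cast
    field_simp
  · intro n hn
    obtain ⟨j, hj⟩ : e ∣ n + 1 := by
      by_contra h
      simp [h] at hn
    have hj0 : j ≠ 0 := by rintro rfl; simp at hj
    refine ⟨j - 1, show e * (j - 1 + 1) - 1 = n from ?_⟩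
    rw [Nat.sub_add_cancel (Nat.one_le_iff_ne_zero.mpr hj0), ← hj, Nat.add_sub_cancel]

theorem sum_coprime_tsum_pow_div_cpow {z : ℂ} {M : ℕ} (hz : z ^ M = 1) {s : ℂ}
    (hs : 1 < s.re) :
    ∑ b ∈ Icc 1 M with b.Coprime M, ∑' n : ℕ, z ^ ((n + 1) * b) / ((n + 1 : ℕ) : ℂ) ^ s
      = riemannZeta s *
          ∑ t ∈ M.divisors, μ t * ((M / t : ℕ) : ℂ) / (orderOf (z ^ t) : ℂ) ^ s := by
  rcases Nat.eq_zero_or_pos M with rfl | hM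
  · simp
  have hz1 : ‖z‖ = 1 := Complex.norm_eq_one_of_pow_eq_one hz hM.ne'
  rw [← Summable.tsum_finsetSum fun b _ =>
    summable_div_succ_cpow (C := 1) (fun n => by simp [hz1]) hs]
  have hterm : ∀ n : ℕ,
      ∑ b ∈ Icc 1 M with b.Coprime M, z ^ ((n + 1) * b) / ((n + 1 : ℕ) : ℂ) ^ s
        = ∑ t ∈ M.divisors, μ t * ((M / t : ℕ) : ℂ) *
            ((if orderOf (z ^ t) ∣ n + 1 then 1 else 0) / ((n + 1 : ℕ) : ℂ) ^ s) := by
    intro n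
    simp_rw [← sum_div, pow_mul]
    rw [sum_coprime_pow_eq_sum_moebius (by rw [← pow_mul, mul_comm, pow_mul, hz, one_pow]),
      sum_div]
    refine sum_congr rfl fun t _ => ?_
    simp only [pow_right_comm z (n + 1) t, ← orderOf_dvd_iff_pow_eq_one]
    split_ifs <;> ring
  rw [tsum_congr hterm, Summable.tsum_finsetSum fun t _ => (summable_div_succ_cpow (C := 1)
    (fun n => by split_ifs <;> simp) hs).mul_left _, mul_sum]
  refine sum_congr rfl fun t _ => ?_
  rw [tsum_mul_left, tsum_ite_dvd_div_cpow _ hs]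
  ring

theorem Nat.totient_mul_mul_totient_of_coprime {m n : ℕ} (c : ℕ) (hmn : m.Coprime n) :
    φ (c * m * n) * φ c = φ (c * m) * φ (c * n) := by
  rcases Nat.eq_zero_or_pos c with rfl | hc
  · simp
  have hgcd : (c * m).gcd n = c.gcd n := Nat.Coprime.gcd_mul_right_cancel c hmn
  have h₁ := Nat.totient_gcd_mul_totient_mul (c * m) n
  have h₂ := Nat.totient_gcd_mul_totient_mul c n
  rw [hgcd] at h₁
  refine Nat.eq_of_mul_eq_mul_left (Nat.totient_pos.mpr (Nat.gcd_pos_of_pos_left n hc)) ?_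
  zify at h₁ h₂ ⊢
  linear_combination (φ c : ℤ) * h₁ - (φ (c * m) : ℤ) * h₂

theorem Nat.totient_mul_prime_pow_succ {p : ℕ} (hp : p.Prime) (c j : ℕ) :
    φ (c * p ^ (j + 1)) = p ^ j * φ (c * p) := by
  induction j with
  | zero => simp
  | succ j ih =>
    have hdvd : p ∣ c * p ^ (j + 1) := dvd_mul_of_dvd_right (dvd_pow_self p j.succ_ne_zero) c
    rw [pow_succ, ← mul_assoc, mul_comm _ p, Nat.totient_mul_of_prime_of_dvd hp hdvd, ih]
    ring

namespace ArithmeticFunction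

def coprimeMoebius (c : ℕ) : ArithmeticFunction ℚ :=
  ⟨fun u => if u.Coprime c then (μ u : ℚ) else 0, by simp⟩

theorem coprimeMoebius_apply (c u : ℕ) :
    coprimeMoebius c u = if u.Coprime c then (μ u : ℚ) else 0 := rfl

theorem isMultiplicative_coprimeMoebius (c : ℕ) : (coprimeMoebius c).IsMultiplicative := by
  refine ⟨by simp [coprimeMoebius_apply], fun {m n} hmn => ?_⟩
  simp only [coprimeMoebius_apply, Nat.coprime_mul_iff_left,
    isMultiplicative_moebius.map_mul_of_coprime hmn, Int.cast_mul]
  split_ifs <;> simp_all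

theorem moebius_mul_eq_mul_coprimeMoebius (m u : ℕ) :
    (μ (m * u) : ℚ) = μ m * coprimeMoebius m u := by
  rw [coprimeMoebius_apply]
  split_ifs with h
  · rw [isMultiplicative_moebius.map_mul_of_coprime h.symm, Int.cast_mul]
  · rw [moebius_eq_zero_of_not_squarefree (fun hsq => h (Nat.squarefree_mul_iff.mp hsq).1.symm),
      Int.cast_zero, mul_zero]

def totientMulDiv (c : ℕ) : ArithmeticFunction ℚ :=
  ⟨fun N => (φ (c * N) : ℚ) / φ c, by simp⟩

theorem totientMulDiv_apply (c N : ℕ) : totientMulDiv c N = (φ (c * N) : ℚ) / φ c := rfl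

theorem isMultiplicative_totientMulDiv {c : ℕ} (hc : c ≠ 0) :
    (totientMulDiv c).IsMultiplicative := by
  have hφc : (φ c : ℚ) ≠ 0 := by exact_mod_cast (Nat.totient_pos.mpr (Nat.pos_of_ne_zero hc)).ne'
  refine ⟨by simp [totientMulDiv_apply, hφc], fun {m n} hmn => ?_⟩
  simp only [totientMulDiv_apply, ← mul_assoc]
  field_simp
  exact_mod_cast Nat.totient_mul_mul_totient_of_coprime c hmn

theorem coprimeMoebius_mul_id {c : ℕ} (hc : c ≠ 0) :
    coprimeMoebius c * (ArithmeticFunction.id : ArithmeticFunction ℚ) = totientMulDiv c := by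
  have hφc : (φ c : ℚ) ≠ 0 := by exact_mod_cast (Nat.totient_pos.mpr (Nat.pos_of_ne_zero hc)).ne'
  rw [((isMultiplicative_coprimeMoebius c).mul isMultiplicative_id.natCast).eq_iff_eq_on_prime_powers
    _ _ (isMultiplicative_totientMulDiv hc)]
  rintro p (_ | j) hp
  · simp [coprimeMoebius_apply, totientMulDiv_apply, hφc]
  have hconv : (coprimeMoebius c * ↑ArithmeticFunction.id) (p ^ (j + 1))
      = coprimeMoebius c p * ((p : ℚ) ^ (j + 1) / p) + (p : ℚ) ^ (j + 1) := by
    rw [mul_apply, Nat.sum_divisorsAntidiagonal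
        (f := fun x y => coprimeMoebius c x * (↑ArithmeticFunction.id : ArithmeticFunction ℚ) y),
      Nat.sum_divisors_prime_pow hp, sum_range_succ', sum_range_succ']
    simp [coprimeMoebius_apply, moebius_apply_prime_pow hp, hp.ne_zero]
  have hp0 : (p : ℚ) ≠ 0 := by exact_mod_cast hp.ne_zero
  rw [hconv, coprimeMoebius_apply, totientMulDiv_apply, Nat.totient_mul_prime_pow_succ hp,
    mul_comm c p]
  by_cases hpc : p ∣ c
  · rw [if_neg (hp.coprime_iff_not_dvd.not.mpr (not_not.mpr hpc)),
      Nat.totient_mul_of_prime_of_dvd hp hpc]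
    push_cast
    field_simp
    ring
  · rw [if_pos (hp.coprime_iff_not_dvd.mpr hpc), moebius_apply_prime hp,
      Nat.totient_mul_of_prime_of_not_dvd hp hpc]
    push_cast [Nat.cast_sub hp.one_le]
    field_simp
    ring

end ArithmeticFunction

theorem sum_divisors_filter_dvd_moebius_mul_div {m M : ℕ} (hm : m ∣ M) :
    ∑ t ∈ M.divisors with m ∣ t, (μ t : ℚ) * (M / t : ℕ) = μ m * φ M / φ m := by
  rcases Nat.eq_zero_or_pos m with rfl | hm0
  · simp [Nat.eq_zero_of_zero_dvd hm]
  obtain ⟨N, rfl⟩ := hm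
  rw [Nat.divisors_filter_dvd_eq_image (dvd_mul_right m N),
    sum_image fun x _ y _ h => Nat.eq_of_mul_eq_mul_left hm0 h, Nat.mul_div_cancel_left N hm0]
  simp_rw [Nat.mul_div_mul_left N _ hm0, moebius_mul_eq_mul_coprimeMoebius, mul_assoc, ← mul_sum]
  have := congrArg (· N) (coprimeMoebius_mul_id hm0.ne')
  simp only [mul_apply, totientMulDiv_apply, natCoe_apply, id_apply] at this
  rw [← Nat.sum_divisorsAntidiagonal (f := fun u v => coprimeMoebius m u * (v : ℚ)), this,
    mul_div_assoc]

theorem Complex.natCast_cpow_ne_zero {a : ℕ} (ha : a ≠ 0) (s : ℂ) : (a : ℂ) ^ s ≠ 0 := by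
  simp [Complex.cpow_eq_zero_iff, ha]

theorem Complex.natCast_cpow_eq_mul_div_cpow {a n : ℕ} (h : a ∣ n) (s : ℂ) :
    (n : ℂ) ^ s = (a : ℂ) ^ s * ((n / a : ℕ) : ℂ) ^ s := by
  rw [← Complex.natCast_mul_natCast_cpow, ← Nat.cast_mul, Nat.mul_div_cancel' h]

theorem Complex.natCast_div_natCast_cpow (m q : ℕ) (s : ℂ) :
    ((m : ℂ) / q) ^ s = (m : ℂ) ^ s / (q : ℂ) ^ s := by
  simpa using Complex.div_cpow_ofReal_nonneg (Nat.cast_nonneg m) (Nat.cast_nonneg q) s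

theorem sum_divisors_cpow_mul_sum_moebius_div_cpow {g : ℕ} (hg : g ≠ 0) (s : ℂ) :
    ∑ m ∈ g.divisors, (m : ℂ) ^ s * ∑ a ∈ m.divisors, (μ a : ℂ) / (a : ℂ) ^ s = (g : ℂ) ^ s := by
  refine (sum_eq_iff_sum_mul_moebius_eq (R := ℂ) (g := fun n => (n : ℂ) ^ s)).mpr
    (fun n _ => ?_) g (Nat.pos_of_ne_zero hg)
  rw [Nat.sum_divisorsAntidiagonal (f := fun a b => (μ a : ℂ) * (b : ℂ) ^ s), mul_sum]
  refine sum_congr rfl fun a ha => ?_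
  rw [Complex.natCast_cpow_eq_mul_div_cpow (Nat.dvd_of_mem_divisors ha)]
  field_simp [Complex.natCast_cpow_ne_zero (Nat.ne_of_gt (Nat.pos_of_mem_divisors ha)) s]

theorem totient_mul_sum_moebius_div_totient_cpow {q M : ℕ} (hqM : q ∣ M) (s : ℂ) :
    (φ M : ℂ) * ∑ m ∈ q.divisors, (μ m : ℂ) / φ m * ((m : ℂ) / q) ^ s *
        ∑ a ∈ m.divisors, (μ a : ℂ) / (a : ℂ) ^ s
      = ∑ t ∈ M.divisors, μ t * ((M / t : ℕ) : ℂ) / ((q / q.gcd t : ℕ) : ℂ) ^ s := by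
  rcases Nat.eq_zero_or_pos q with rfl | hq
  · simp [Nat.eq_zero_of_zero_dvd hqM]
  have hmoebius : ∀ m ∈ q.divisors, (φ M : ℂ) * (μ m / φ m)
      = ∑ t ∈ M.divisors with m ∣ t, (μ t : ℂ) * (M / t : ℕ) := by
    intro m hm
    have := congrArg (fun x : ℚ => (x : ℂ))
      (sum_divisors_filter_dvd_moebius_mul_div ((Nat.dvd_of_mem_divisors hm).trans hqM))
    push_cast at this
    rw [this, mul_div_assoc']
    ring
  calc (φ M : ℂ) * ∑ m ∈ q.divisors, (μ m : ℂ) / φ m * ((m : ℂ) / q) ^ s *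
        ∑ a ∈ m.divisors, (μ a : ℂ) / (a : ℂ) ^ s
      = ∑ m ∈ q.divisors, ∑ t ∈ M.divisors with m ∣ t, (μ t : ℂ) * (M / t : ℕ) *
          ((m : ℂ) ^ s * ∑ a ∈ m.divisors, (μ a : ℂ) / (a : ℂ) ^ s) / (q : ℂ) ^ s := by
        rw [mul_sum]
        refine sum_congr rfl fun m hm => ?_
        rw [← sum_div, ← sum_mul, ← hmoebius m hm, Complex.natCast_div_natCast_cpow]
        ring
    _ = ∑ t ∈ M.divisors, ∑ m ∈ (q.gcd t).divisors, (μ t : ℂ) * (M / t : ℕ) *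
          ((m : ℂ) ^ s * ∑ a ∈ m.divisors, (μ a : ℂ) / (a : ℂ) ^ s) / (q : ℂ) ^ s := by
        refine sum_comm' fun m t => ?_
        simp only [mem_filter, Nat.mem_divisors, Nat.dvd_gcd_iff, ne_eq, Nat.gcd_eq_zero_iff]
        have := hq.ne'
        tauto
    _ = ∑ t ∈ M.divisors, μ t * ((M / t : ℕ) : ℂ) / ((q / q.gcd t : ℕ) : ℂ) ^ s := by
        refine sum_congr rfl fun t ht => ?_
        have hg := Nat.gcd_pos_of_pos_left t hq
        rw [← sum_div, ← mul_sum, sum_divisors_cpow_mul_sum_moebius_div_cpow hg.ne',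
          Complex.natCast_cpow_eq_mul_div_cpow (Nat.gcd_dvd_left q t)]
        field_simp [Complex.natCast_cpow_ne_zero hg.ne']

theorem lerch_sum_evaluation_general (q P : ℕ) (hq : 0 < q) (s : ℂ) (hs : 1 < s.re) :
    (∀ b : ℕ, Summable (fun n : ℕ =>
        Complex.exp (2 * Real.pi * Complex.I * ((n : ℂ) + 1) * b / q) /
          ((n + 1 : ℕ) : ℂ) ^ s)) ∧
    ∑ b ∈ Finset.Icc 1 (q * P),
        (if Nat.gcd b (q * P) = 1 then
          ∑' n : ℕ, Complex.exp (2 * Real.pi * Complex.I * ((n : ℂ) + 1) * b / q) /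
            ((n + 1 : ℕ) : ℂ) ^ s
        else 0)
      = riemannZeta s * ((Nat.totient (q * P) : ℂ)) *
          ∑ m ∈ q.divisors,
            ((ArithmeticFunction.moebius m : ℤ) : ℂ) / (Nat.totient m : ℂ) *
              (((m : ℂ)) / ((q : ℂ))) ^ s *
              ∑ a ∈ m.divisors, ((ArithmeticFunction.moebius a : ℤ) : ℂ) / ((a : ℂ)) ^ s := by
  set ζ := Complex.exp (2 * Real.pi * Complex.I / q)
  have hζ : IsPrimitiveRoot ζ q := Complex.isPrimitiveRoot_exp q hq.ne'
  have hexp : ∀ n b : ℕ, Complex.exp (2 * Real.pi * Complex.I * ((n : ℂ) + 1) * b / q)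
      = ζ ^ ((n + 1) * b) := fun n b => by
    rw [← Complex.exp_nat_mul]
    congr 1
    push_cast
    ring
  simp_rw [hexp, ← Nat.coprime_iff_gcd_eq_one, ← sum_filter]
  refine ⟨fun b => summable_div_succ_cpow (C := 1)
    (fun n => by simp [Complex.norm_eq_one_of_pow_eq_one hζ.pow_eq_one hq.ne']) hs, ?_⟩
  have horder : ∀ t ∈ (q * P).divisors, orderOf (ζ ^ t) = q / q.gcd t := fun t ht => by
    rw [orderOf_pow' ζ (Nat.pos_of_mem_divisors ht).ne', ← hζ.eq_orderOf]
  rw [sum_coprime_tsum_pow_div_cpow (by rw [pow_mul, hζ.pow_eq_one, one_pow]) hs, mul_assoc,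
    totient_mul_sum_moebius_div_totient_cpow (dvd_mul_right q P)]
  exact congrArg _ (sum_congr rfl fun t ht => by rw [horder t ht])

/-- Let `q, P ≥ 1` and `Re s > 1`.  Then, the inner series being absolutely convergent,
`∑_{1 ≤ b ≤ qP, gcd(b,qP)=1} ∑_{n≥1} e^{2πi nb/q} n^{-s}
  = ζ(s) φ(qP) ∑_{m ∣ q} (μ(m)/φ(m)) (m/q)^s ∑_{a ∣ m} μ(a) a^{-s}`. -/
theorem lerch_sum_evaluation (q P : ℕ) (hq : 0 < q) (hP : 0 < P) (s : ℂ) (hs : 1 < s.re) :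
    (∀ b : ℕ, Summable (fun n : ℕ =>
        Complex.exp (2 * Real.pi * Complex.I * ((n : ℂ) + 1) * b / q) /
          ((n + 1 : ℕ) : ℂ) ^ s)) ∧
    ∑ b ∈ Finset.Icc 1 (q * P),
        (if Nat.gcd b (q * P) = 1 then
          ∑' n : ℕ, Complex.exp (2 * Real.pi * Complex.I * ((n : ℂ) + 1) * b / q) /
            ((n + 1 : ℕ) : ℂ) ^ s
        else 0)
      = riemannZeta s * ((Nat.totient (q * P) : ℂ)) *
          ∑ m ∈ q.divisors,
            ((ArithmeticFunction.moebius m : ℤ) : ℂ) / (Nat.totient m : ℂ) *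
              (((m : ℂ)) / ((q : ℂ))) ^ s *
              ∑ a ∈ m.divisors, ((ArithmeticFunction.moebius a : ℤ) : ℂ) / ((a : ℂ)) ^ s :=
  lerch_sum_evaluation_general q P hq s hs
end
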